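/- For all m ≥ 1 and n ≥ 2, there exists an m-state realtime deterministic pushdown automaton with n pushdown symbols accepting the language L_{m,n} = { b^k a | 1 ≤ k ≤ mn−1 }. -/

import Mathlib

/-- The binary input alphabet `{a, b}`. -/
inductive Bin : Type
  | a : Bin
  | b : Bin
deriving DecidableEq

/-- The language `L_n = { b^k a | 1 ≤ k ≤ n-1 }` over `{a, b}`. -/
def Ln (n : ℕ) : Set (List Bin) :=
  {w | ∃ k, 1 ≤ k ∧ k ≤ n - 1 ∧ w = List.replicate k Bin.b ++ [Bin.a]}

/-- The language `L_{m,n} = { b^k a | 1 ≤ k ≤ mn-1 }` over `{a, b}`. -/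
def Lmn (m n : ℕ) : Set (List Bin) :=
  {w | ∃ k, 1 ≤ k ∧ k ≤ m * n - 1 ∧ w = List.replicate k Bin.b ++ [Bin.a]}

/-- A realtime deterministic pushdown automaton (no ε-moves) over input
alphabet `A`: state set `Q`, pushdown alphabet `Γ`, partial transition
function `δ`, initial state `q0`, initial pushdown symbol `Z0`, and accepting
states `F`. -/
structure RPDA (A : Type) where
  Q : Type
  [instQ : Fintype Q]
  Γ : Type
  [instΓ : Fintype Γ]
  δ : Q → Γ → A → Option (Q × List Γ)
  q0 : Q
  Z0 : Γ
  F : Set Q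

attribute [instance] RPDA.instQ RPDA.instΓ

/-- `M.Steps c w c'` : from configuration `c` (state and pushdown content,
top of the pushdown being the head of the list) the automaton reads the input
string `w` and reaches configuration `c'`. -/
inductive RPDA.Steps {A : Type} (M : RPDA A) :
    M.Q × List M.Γ → List A → M.Q × List M.Γ → Prop
  | refl (c : M.Q × List M.Γ) : RPDA.Steps M c [] c
  | step {q : M.Q} {X : M.Γ} {γ : List M.Γ} {a : A} {p : M.Q} {w : List M.Γ}
      {ws : List A} {c : M.Q × List M.Γ} :
      M.δ q X a = some (p, w) → RPDA.Steps M (p, w ++ γ) ws c →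
      RPDA.Steps M (q, X :: γ) (a :: ws) c

/-- Acceptance by final state and empty pushdown. -/
def RPDA.Accepts {A : Type} (M : RPDA A) (w : List A) : Prop :=
  ∃ f ∈ M.F, M.Steps (M.q0, [M.Z0]) w (f, [])

/-!
The automaton stores the number `k` of `b`s read so far in its state `q_j` and its single pushdown
symbol `X_i`, as `k = j * n + i`; reading a further `b` at `k = m * n - 1` blocks. An `a` pops the
pushdown and enters the accepting state `q_{m-1}` unless `k = 0`, and nothing more can be read on
the empty pushdown. Determinism lets us replace the relation `Steps` by the partial function
`RPDA.run`.
-/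

namespace RPDA

variable {A : Type} (M : RPDA A)

def run : M.Q × List M.Γ → List A → Option (M.Q × List M.Γ)
  | c, [] => some c
  | (_, []), _ :: _ => none
  | (q, X :: γ), a :: ws => (M.δ q X a).bind fun (p, w) => run (p, w ++ γ) ws

def init : M.Q × List M.Γ := (M.q0, [M.Z0])

theorem steps_iff_run {c c' : M.Q × List M.Γ} {w : List A} :
    M.Steps c w c' ↔ M.run c w = some c' := by
  constructor
  · intro h
    induction h with
    | refl c => rw [run]
    | step hδ _ ih => simp [run, hδ, ih]
  · induction w generalizing c with
    | nil =>
      rintro ⟨⟩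
      exact .refl _
    | cons a ws ih =>
      obtain ⟨q, _ | ⟨X, γ⟩⟩ := c
      · simp [run]
      · cases hδ : M.δ q X a with
        | none => simp [run, hδ]
        | some pw => exact fun h => .step hδ (ih (by simpa [run, hδ] using h))

theorem accepts_iff_run {w : List A} :
    M.Accepts w ↔ ∃ f ∈ M.F, M.run M.init w = some (f, []) := by
  simp only [Accepts, init, steps_iff_run]

theorem run_append (u v : List A) (c : M.Q × List M.Γ) :
    M.run c (u ++ v) = (M.run c u).bind fun c' => M.run c' v := by
  induction u generalizing c with
  | nil => simp [run]
  | cons a u ih =>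
    obtain ⟨q, _ | ⟨X, γ⟩⟩ := c
    · simp [run]
    · simp [run, ih, Option.bind_assoc]

theorem run_empty_stack_eq_some_iff {q : M.Q} {w : List A} {c : M.Q × List M.Γ} :
    M.run (q, []) w = some c ↔ w = [] ∧ c = (q, []) := by
  cases w <;> simp [run, eq_comm]

end RPDA

theorem eq_replicate_b_or_eq_replicate_b_append_a (w : List Bin) :
    (∃ k, w = List.replicate k .b) ∨ ∃ k rest, w = List.replicate k .b ++ .a :: rest := by
  induction w with
  | nil => exact .inl ⟨0, rfl⟩
  | cons x w ih =>
    cases x with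
    | a => exact .inr ⟨0, w, rfl⟩
    | b =>
      rcases ih with ⟨k, rfl⟩ | ⟨k, rest, rfl⟩
      · exact .inl ⟨k + 1, rfl⟩
      · exact .inr ⟨k + 1, rest, rfl⟩

def lmnRPDA (m n : ℕ) (hm : 0 < m) (hn : 0 < n) : RPDA Bin where
  Q := Fin m
  Γ := Fin n
  δ q X
    | .b =>
      if h : X.val + 1 < n then some (q, [⟨X + 1, h⟩])
      else if h' : q.val + 1 < m then some (⟨q + 1, h'⟩, [⟨0, hn⟩])
      else none
    | .a => if q.val = 0 ∧ X.val = 0 then none else some (⟨m - 1, by omega⟩, [])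
  q0 := ⟨0, hm⟩
  Z0 := ⟨0, hn⟩
  F := {⟨m - 1, by omega⟩}

namespace lmnRPDA

variable {m n : ℕ} {hm : 0 < m} {hn : 0 < n}

local notation "𝓜" => lmnRPDA m n hm hn

theorem run_replicate_b {k : ℕ} (hk : k < m * n) :
    (𝓜).run (𝓜).init (List.replicate k .b) =
      some (⟨k / n, (Nat.div_lt_iff_lt_mul hn).2 hk⟩, [⟨k % n, Nat.mod_lt k hn⟩]) := by
  induction k with
  | zero => simp [RPDA.run, RPDA.init, lmnRPDA]
  | succ k ih =>
    rw [List.replicate_succ', RPDA.run_append, ih (by omega)]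
    have hdiv := Nat.div_add_mod k n
    have hmod := Nat.mod_lt k hn
    by_cases hin : k % n + 1 < n
    · obtain ⟨hq, hi⟩ := (Nat.div_mod_unique hn).2 (⟨by omega, hin⟩ :
        k % n + 1 + n * (k / n) = k + 1 ∧ k % n + 1 < n)
      simp [RPDA.run, lmnRPDA, hin, hq, hi]
    · obtain ⟨hq, hi⟩ := (Nat.div_mod_unique hn).2 (⟨by rw [mul_add]; omega, hn⟩ :
        0 + n * (k / n + 1) = k + 1 ∧ 0 < n)
      have hqm : k / n + 1 < m := hq ▸ (Nat.div_lt_iff_lt_mul hn).2 hk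
      simp [RPDA.run, lmnRPDA, hin, hqm, hq, hi]

theorem run_replicate_b_append_eq_none {k : ℕ} (hk : m * n ≤ k) (v : List Bin) :
    (𝓜).run (𝓜).init (List.replicate k .b ++ v) = none := by
  have hnmn : n ≤ m * n := Nat.le_mul_of_pos_left n hm
  obtain ⟨hq, hi⟩ := (Nat.div_mod_unique hn).2 (⟨by rw [Nat.mul_sub_one, mul_comm n m]; omega,
    by omega⟩ : n - 1 + n * (m - 1) = m * n - 1 ∧ n - 1 < n)
  have hsplit : List.replicate k .b ++ v =
      List.replicate (m * n - 1) .b ++ .b :: (List.replicate (k - m * n) .b ++ v) := by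
    rw [← List.cons_append, ← List.replicate_succ, ← List.append_assoc, ← List.replicate_add]
    congr 2
    omega
  rw [hsplit, RPDA.run_append, run_replicate_b (by omega)]
  simp [RPDA.run, lmnRPDA, hq, hi, Nat.sub_add_cancel hm, Nat.sub_add_cancel hn]

theorem run_replicate_b_append_a {k : ℕ} (hk : k < m * n) (rest : List Bin) :
    (𝓜).run (𝓜).init (List.replicate k .b ++ .a :: rest) =
      if k = 0 then none else (𝓜).run ((⟨m - 1, by omega⟩ : Fin m), []) rest := by
  have hk0 : k / n = 0 ∧ k % n = 0 ↔ k = 0 :=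
    (Nat.div_mod_unique hn).trans (by simp [hn, eq_comm])
  rw [RPDA.run_append, run_replicate_b hk]
  simp only [Option.bind_some, RPDA.run, lmnRPDA, hk0]
  split_ifs <;> rfl

theorem mem_Lmn_of_run_eq_some_nil {w : List Bin} {f : (𝓜).Q}
    (h : (𝓜).run (𝓜).init w = some (f, [])) : w ∈ Lmn m n := by
  rcases eq_replicate_b_or_eq_replicate_b_append_a w with ⟨k, rfl⟩ | ⟨k, rest, rfl⟩
  · by_cases hk : k < m * n
    · rw [run_replicate_b hk] at h
      exact absurd (congrArg Prod.snd (Option.some.inj h)) (List.cons_ne_nil _ _)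
    · rw [← List.append_nil (List.replicate k _),
        run_replicate_b_append_eq_none (not_lt.1 hk)] at h
      cases h
  · by_cases hk : k < m * n
    · rw [run_replicate_b_append_a hk] at h
      split_ifs at h with hk0
      obtain ⟨rfl, -⟩ := (RPDA.run_empty_stack_eq_some_iff _).1 h
      exact ⟨k, by omega, by omega, rfl⟩
    · rw [run_replicate_b_append_eq_none (not_lt.1 hk)] at h
      cases h

end lmnRPDA

/-- For all `m ≥ 1` and `n ≥ 2`, there exists an `m`-state
realtime deterministic pushdown automaton with `n` pushdown symbols accepting
`L_{m,n} = { b^k a | 1 ≤ k ≤ mn-1 }`. -/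
theorem exists_rpda_for_Lmn (m n : ℕ) (hm : 1 ≤ m) (hn : 2 ≤ n) :
    ∃ M : RPDA Bin, Fintype.card M.Q = m ∧ Fintype.card M.Γ = n ∧
      ∀ w : List Bin, M.Accepts w ↔ w ∈ Lmn m n := by
  refine ⟨lmnRPDA m n hm (by omega), Fintype.card_fin m, Fintype.card_fin n, fun w => ?_⟩
  rw [RPDA.accepts_iff_run]
  constructor
  · rintro ⟨f, -, h⟩
    exact lmnRPDA.mem_Lmn_of_run_eq_some_nil h
  · rintro ⟨k, hk1, hk2, rfl⟩
    refine ⟨⟨m - 1, by omega⟩, rfl, ?_⟩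
    rw [lmnRPDA.run_replicate_b_append_a (by omega), if_neg (by omega)]
    rfl
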